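/- Let E be a locally compact Polish space, E^Δ its one-point compactification, D ⊆ C(E^Δ,ℝ) a dense linear subspace containing the constant function 1, and Q : D × D → C((E^Δ)²,ℝ) a symmetric bilinear map whose values are symmetric functions of their two arguments. Then the following are equivalent: (i) Q(g,g)(x,y) ≥ 0 for all g ∈ D and x,y ∈ E, with equality whenever g(x) = g(y); (ii) ∬_{E²} Q(g,g)(x,y) dν(x)dν(y) ≥ 0 for all g ∈ D and all Borel probability measures ν on E, with equality whenever g is constant on the topological support of ν. If either condition holds, then there exists a nonnegative symmetric function α : E² → ℝ such that Q(g,h)(x,y) = ½ α(x,y)(g(x) − g(y))(h(x) − h(y)) for all g,h ∈ D and x,y ∈ E; that is, Q = α Ψ. -/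

import Mathlib

open MeasureTheory Filter Topology

/-- The topological support of a measure: the points all of whose open neighborhoods have
positive measure. -/
def measureSupport {X : Type*} [TopologicalSpace X] [MeasurableSpace X]
    (μ : Measure X) : Set X :=
  {x | ∀ U : Set X, IsOpen U → x ∈ U → 0 < μ U}

section Aux

lemma QisPsi.bilin_null {M : Type*} [AddCommGroup M] [Module ℝ M]
    (B : M →ₗ[ℝ] M →ₗ[ℝ] ℝ) (hsym : ∀ v w, B v w = B w v)
    (hpos : ∀ v, 0 ≤ B v v) {g : M} (hg : B g g = 0) (h : M) : B g h = 0 := by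
  by_contra hc
  have key : ∀ t : ℝ, 0 ≤ B h h + 2 * t * B g h := by
    intro t
    have h2 := hpos (h + t • g)
    simp only [map_add, LinearMap.map_smul, LinearMap.add_apply, LinearMap.smul_apply,
      smul_eq_mul, hg, ← hsym g h] at h2
    nlinarith [h2]
  have h3 := key (-(B h h + 1) / (2 * B g h))
  have he : 2 * (-(B h h + 1) / (2 * B g h)) * B g h = -(B h h + 1) := by
    field_simp
  linarith

lemma QisPsi.bilin_factor {M : Type*} [AddCommGroup M] [Module ℝ M]
    (B : M →ₗ[ℝ] M →ₗ[ℝ] ℝ) (hsym : ∀ v w, B v w = B w v)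
    (hpos : ∀ v, 0 ≤ B v v) (φ : M →ₗ[ℝ] ℝ) (hker : ∀ v, φ v = 0 → B v v = 0)
    (g₀ : M) (h₀ : φ g₀ ≠ 0) (g h : M) :
    B g h = (B g₀ g₀ / (φ g₀) ^ 2) * (φ g * φ h) := by
  have main : ∀ v : M, B v g₀ = (φ v / φ g₀) * B g₀ g₀ := by
    intro v
    have hv : φ (v - (φ v / φ g₀) • g₀) = 0 := by
      simp only [map_sub, _root_.map_smul, smul_eq_mul]
      field_simp
      ring
    have hz := QisPsi.bilin_null B hsym hpos (hker _ hv) g₀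
    have : B v g₀ - (φ v / φ g₀) * B g₀ g₀ = 0 := by
      simpa [map_sub, LinearMap.map_smul, LinearMap.sub_apply, LinearMap.smul_apply,
        smul_eq_mul] using hz
    linarith
  have hv : φ (g - (φ g / φ g₀) • g₀) = 0 := by
    simp only [map_sub, _root_.map_smul, smul_eq_mul]; field_simp; ring
  have hz := QisPsi.bilin_null B hsym hpos (hker _ hv) h
  have h1 : B g h = (φ g / φ g₀) * B g₀ h := by
    have : B g h - (φ g / φ g₀) * B g₀ h = 0 := by
      simpa [map_sub, LinearMap.map_smul, LinearMap.sub_apply, LinearMap.smul_apply,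
        smul_eq_mul] using hz
    linarith
  rw [h1, hsym g₀ h, main h]
  field_simp

lemma QisPsi.measure_compl_measureSupport {E : Type*} [TopologicalSpace E]
    [SecondCountableTopology E] [MeasurableSpace E] [OpensMeasurableSpace E]
    (ν : Measure E) : ν (measureSupport ν)ᶜ = 0 := by
  classical
  set B := TopologicalSpace.countableBasis E with hB
  set N : Set (Set E) := {b ∈ B | ν b = 0} with hN
  have hsub : (measureSupport ν)ᶜ ⊆ ⋃₀ N := by
    intro x hx
    simp only [Set.mem_compl_iff, measureSupport, Set.mem_setOf_eq, not_forall] at hx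
    obtain ⟨U, hU, hxU, hne⟩ := hx
    have hν : ν U = 0 := by simpa using (not_lt.mp hne)
    obtain ⟨b, hb, hxb, hbU⟩ :=
      (TopologicalSpace.isBasis_countableBasis E).isOpen_iff.mp hU x hxU
    exact ⟨b, ⟨hb, le_antisymm (hν ▸ measure_mono hbU) (zero_le)⟩, hxb⟩
  have hcnt : N.Countable := (TopologicalSpace.countable_countableBasis E).mono
    (fun b hb => hb.1)
  have hnull : ν (⋃₀ N) = 0 := (measure_sUnion_null_iff hcnt).mpr (fun s hs => hs.2)
  exact le_antisymm (hnull ▸ measure_mono hsub) (zero_le)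

lemma QisPsi.dense_separates {X : Type*} [TopologicalSpace X] [CompactSpace X] [T2Space X]
    (D : Submodule ℝ C(X, ℝ)) (hdense : Dense (D : Set C(X, ℝ)))
    {x y : X} (hxy : x ≠ y) : ∃ g ∈ D, (g : C(X,ℝ)) x ≠ g y := by
  obtain ⟨f, hf0, hf1, -⟩ := exists_continuous_zero_one_of_isClosed
    (isClosed_singleton (x := x)) (isClosed_singleton (x := y))
    (by simpa [Set.disjoint_singleton] using hxy)
  have hfx : f x = 0 := hf0 rfl
  have hfy : f y = 1 := hf1 rfl
  obtain ⟨g, hlt, hgD⟩ := Metric.dense_iff.mp hdense f (1/3) (by norm_num)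
  refine ⟨g, hgD, fun heq => ?_⟩
  rw [Metric.mem_ball, dist_comm] at hlt
  have h1 := ContinuousMap.dist_apply_le_dist (f := f) (g := g) x
  have h2 := ContinuousMap.dist_apply_le_dist (f := f) (g := g) y
  rw [Real.dist_eq] at h1 h2
  rw [hfx] at h1; rw [hfy] at h2
  rw [heq] at h1
  have b1 := abs_le.mp (h1.trans hlt.le)
  have b2 := abs_le.mp (h2.trans hlt.le)
  simp only [zero_sub, abs_neg] at b1 b2
  linarith [b1.1, b1.2, b2.1, b2.2]

variable {E : Type*} [TopologicalSpace E] [T2Space E] [MeasurableSpace E] [BorelSpace E]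

lemma QisPsi.integrable_dirac' {f : E → ℝ} (hf : Measurable f) (x : E) :
    Integrable f (Measure.dirac x) := by
  refine ⟨hf.aestronglyMeasurable, ?_⟩
  rw [HasFiniteIntegral, lintegral_dirac]
  exact ENNReal.coe_lt_top

noncomputable def QisPsi.avgMeasure (x y : E) : Measure E :=
  (2⁻¹ : ENNReal) • Measure.dirac x + (2⁻¹ : ENNReal) • Measure.dirac y

instance QisPsi.avg_prob (x y : E) : IsProbabilityMeasure (QisPsi.avgMeasure x y) := by
  constructor
  simp [QisPsi.avgMeasure]
  rw [ENNReal.inv_two_add_inv_two]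

lemma QisPsi.integral_avgMeasure {f : E → ℝ} (hf : Measurable f) (x y : E) :
    ∫ z, f z ∂(QisPsi.avgMeasure x y) = 2⁻¹ * f x + 2⁻¹ * f y := by
  rw [QisPsi.avgMeasure,
    integral_add_measure ((QisPsi.integrable_dirac' hf x).smul_measure (by norm_num))
    ((QisPsi.integrable_dirac' hf y).smul_measure (by norm_num)),
    integral_smul_measure, integral_smul_measure, integral_dirac, integral_dirac]
  norm_num

lemma QisPsi.supp_dirac_sub (x : E) : measureSupport (Measure.dirac x) ⊆ {x} := by
  intro z hz
  by_contra hne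
  have hU : IsOpen ({x}ᶜ : Set E) := isClosed_singleton.isOpen_compl
  have := hz _ hU (by simpa using hne)
  rw [Measure.dirac_apply' _ hU.measurableSet] at this
  simp at this

lemma QisPsi.supp_avg_sub (x y : E) : measureSupport (QisPsi.avgMeasure x y) ⊆ {x, y} := by
  intro z hz
  by_contra hne
  have hcl : IsClosed ({x, y} : Set E) := (Set.toFinite ({x, y} : Set E)).isClosed
  have := hz _ hcl.isOpen_compl (by simpa using hne)
  have h0 : QisPsi.avgMeasure x y ({x, y}ᶜ : Set E) = 0 := by
    simp only [QisPsi.avgMeasure, Measure.add_apply, Measure.smul_apply, smul_eq_mul]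
    rw [Measure.dirac_apply' _ hcl.isOpen_compl.measurableSet,
      Measure.dirac_apply' _ hcl.isOpen_compl.measurableSet]
    simp
  rw [h0] at this
  exact lt_irrefl _ this

end Aux

/-- Let `E` be locally compact Polish, `D ⊆ C(OnePoint E,ℝ)` a dense
subspace containing `1`, and `Q` a symmetric bilinear map from `D × D` into the symmetric
continuous functions on `(OnePoint E)²`. Then pointwise nonnegativity of `Q(g,g)` on `E²`
with vanishing on the diagonal values `g(x) = g(y)` is equivalent to
`⟨Q(g,g),ν²⟩ ≥ 0` for all probability measures `ν` on `E`, with equality when `g` is constant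
on `supp(ν)`; and in that case `Q = α Ψ` for some nonnegative symmetric `α : E² → ℝ`. -/
theorem Q_is_alpha_Psi
    {E : Type*} [TopologicalSpace E] [PolishSpace E] [LocallyCompactSpace E]
    [MeasurableSpace E] [BorelSpace E]
    (D : Submodule ℝ C(OnePoint E, ℝ)) (hdense : Dense (D : Set C(OnePoint E, ℝ)))
    (h1 : (1 : C(OnePoint E, ℝ)) ∈ D)
    (Q : ↥D →ₗ[ℝ] ↥D →ₗ[ℝ] C(OnePoint E × OnePoint E, ℝ))
    (hQsymm : ∀ g h : ↥D, Q g h = Q h g)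
    (hQval : ∀ (g h : ↥D) (x y : OnePoint E), Q g h (x, y) = Q g h (y, x)) :
    ((∀ (g : ↥D) (x y : E),
        0 ≤ Q g g ((x : OnePoint E), (y : OnePoint E)) ∧
        ((g : C(OnePoint E, ℝ)) (x : OnePoint E) = (g : C(OnePoint E, ℝ)) (y : OnePoint E) →
          Q g g ((x : OnePoint E), (y : OnePoint E)) = 0))
      ↔
      (∀ (g : ↥D) (ν : ProbabilityMeasure E),
        0 ≤ (∫ x : E, ∫ y : E, Q g g ((x : OnePoint E), (y : OnePoint E))
              ∂(ν : Measure E) ∂(ν : Measure E)) ∧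
        ((∀ x ∈ measureSupport (ν : Measure E), ∀ y ∈ measureSupport (ν : Measure E),
            (g : C(OnePoint E, ℝ)) (x : OnePoint E) = (g : C(OnePoint E, ℝ)) (y : OnePoint E)) →
          (∫ x : E, ∫ y : E, Q g g ((x : OnePoint E), (y : OnePoint E))
              ∂(ν : Measure E) ∂(ν : Measure E)) = 0)))
    ∧
    ((∀ (g : ↥D) (x y : E),
        0 ≤ Q g g ((x : OnePoint E), (y : OnePoint E)) ∧
        ((g : C(OnePoint E, ℝ)) (x : OnePoint E) = (g : C(OnePoint E, ℝ)) (y : OnePoint E) →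
          Q g g ((x : OnePoint E), (y : OnePoint E)) = 0)) →
      ∃ α : E → E → ℝ, (∀ x y : E, 0 ≤ α x y) ∧ (∀ x y : E, α x y = α y x) ∧
        ∀ (g h : ↥D) (x y : E),
          Q g h ((x : OnePoint E), (y : OnePoint E))
            = (1 / 2) * α x y *
              ((g : C(OnePoint E, ℝ)) (x : OnePoint E) - (g : C(OnePoint E, ℝ)) (y : OnePoint E)) *
              ((h : C(OnePoint E, ℝ)) (x : OnePoint E) - (h : C(OnePoint E, ℝ)) (y : OnePoint E))) := by
  classical
  -- measurability of the integrands
  have hmeas : ∀ (g h : ↥D) (a : E),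
      Measurable (fun b : E => Q g h ((a : OnePoint E), (b : OnePoint E))) := by
    intro g h a
    exact ((Q g h).continuous.comp
      (Continuous.prodMk continuous_const OnePoint.continuous_coe)).measurable
  have hmeas2 : ∀ (g h : ↥D) (b : E),
      Measurable (fun a : E => Q g h ((a : OnePoint E), (b : OnePoint E))) := by
    intro g h b
    exact ((Q g h).continuous.comp
      (Continuous.prodMk OnePoint.continuous_coe continuous_const)).measurable
  constructor
  · -- the equivalence
    constructor
    · -- (i) → (ii)
      intro hi g ν
      constructor
      · exact integral_nonneg fun x => integral_nonneg fun y => (hi g x y).1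
      · intro hc
        have hae : ∀ᵐ (x : E) ∂(ν : Measure E), x ∈ measureSupport (ν : Measure E) := by
          rw [ae_iff]
          have h0 := QisPsi.measure_compl_measureSupport (E := E) (ν : Measure E)
          exact h0
        have hinner : ∀ᵐ (x : E) ∂(ν : Measure E),
            (∫ y : E, Q g g ((x : OnePoint E), (y : OnePoint E)) ∂(ν : Measure E)) = 0 := by
          filter_upwards [hae] with x hx
          have : ∀ᵐ (y : E) ∂(ν : Measure E),
              Q g g ((x : OnePoint E), (y : OnePoint E)) = 0 := by
            filter_upwards [hae] with y hy
            exact (hi g x y).2 (hc x hx y hy)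
          exact integral_eq_zero_of_ae this
        exact integral_eq_zero_of_ae hinner
    · -- (ii) → (i)
      intro hii g x y
      -- diagonal vanishing
      have hdiag : ∀ z : E, Q g g ((z : OnePoint E), (z : OnePoint E)) = 0 := by
        intro z
        set νz : ProbabilityMeasure E := ⟨Measure.dirac z, inferInstance⟩ with hνz
        have hco : (νz : Measure E) = Measure.dirac z := rfl
        have hz := (hii g νz).2
        rw [hco] at hz
        have hcon : ∀ a ∈ measureSupport (Measure.dirac z : Measure E),
            ∀ b ∈ measureSupport (Measure.dirac z : Measure E),
            (g : C(OnePoint E, ℝ)) (a : OnePoint E) = (g : C(OnePoint E, ℝ)) (b : OnePoint E) := by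
          intro a ha b hb
          have ha' := QisPsi.supp_dirac_sub z ha
          have hb' := QisPsi.supp_dirac_sub z hb
          simp only [Set.mem_singleton_iff] at ha' hb'
          rw [ha', hb']
        have := hz hcon
        rwa [integral_dirac, integral_dirac] at this
      -- double integral over the average measure
      have hcalc : (∫ a : E, ∫ b : E, Q g g ((a : OnePoint E), (b : OnePoint E))
          ∂(QisPsi.avgMeasure x y) ∂(QisPsi.avgMeasure x y))
          = 2⁻¹ * Q g g ((x : OnePoint E), (y : OnePoint E)) := by
        have hin : ∀ a : E, (∫ b : E, Q g g ((a : OnePoint E), (b : OnePoint E))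
            ∂(QisPsi.avgMeasure x y))
            = 2⁻¹ * Q g g ((a : OnePoint E), (x : OnePoint E))
              + 2⁻¹ * Q g g ((a : OnePoint E), (y : OnePoint E)) :=
          fun a => QisPsi.integral_avgMeasure (hmeas g g a) x y
        rw [integral_congr_ae (Eventually.of_forall hin),
          QisPsi.integral_avgMeasure (by
            exact ((hmeas2 g g x).const_mul _).add ((hmeas2 g g y).const_mul _)) x y]
        rw [hdiag x, hdiag y, hQval g g (y : OnePoint E) (x : OnePoint E)]
        ring
      set να : ProbabilityMeasure E := ⟨QisPsi.avgMeasure x y, inferInstance⟩ with hνα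
      have hco : (να : Measure E) = QisPsi.avgMeasure x y := rfl
      constructor
      · have := (hii g να).1
        rw [hco, hcalc] at this
        linarith
      · intro heq
        have hz := (hii g να).2
        rw [hco] at hz
        have hcon : ∀ a ∈ measureSupport (QisPsi.avgMeasure x y),
            ∀ b ∈ measureSupport (QisPsi.avgMeasure x y),
            (g : C(OnePoint E, ℝ)) (a : OnePoint E) = (g : C(OnePoint E, ℝ)) (b : OnePoint E) := by
          intro a ha b hb
          have ha' := QisPsi.supp_avg_sub x y ha
          have hb' := QisPsi.supp_avg_sub x y hb
          simp only [Set.mem_insert_iff, Set.mem_singleton_iff] at ha' hb'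
          rcases ha' with h | h <;> rcases hb' with h' | h' <;> rw [h, h'] <;> simp [heq]
        have := hz hcon
        rw [hcalc] at this
        linarith
  · -- existence of α
    intro hi
    -- bilinear form at a point
    let ev : ∀ (_ _ : OnePoint E), C(OnePoint E × OnePoint E, ℝ) →ₗ[ℝ] ℝ :=
      fun x y => { toFun := fun f => f (x, y), map_add' := fun f g => rfl,
                   map_smul' := fun c f => rfl }
    let B : ∀ (_ _ : OnePoint E), ↥D →ₗ[ℝ] ↥D →ₗ[ℝ] ℝ :=
      fun x y => Q.compr₂ (ev x y)
    let φ : ∀ (_ _ : OnePoint E), ↥D →ₗ[ℝ] ℝ :=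
      fun x y => { toFun := fun g => (g : C(OnePoint E, ℝ)) x - (g : C(OnePoint E, ℝ)) y,
                   map_add' := by intro f g; simp; ring
                   map_smul' := by intro c f; simp; ring }
    have hBapp : ∀ (x y : OnePoint E) (g h : ↥D), B x y g h = Q g h (x, y) := fun _ _ _ _ => rfl
    have hBsym : ∀ (x y : OnePoint E) (g h : ↥D), B x y g h = B x y h g := by
      intro x y g h; simp only [hBapp, hQsymm g h]
    have hBpos : ∀ (x y : E) (g : ↥D), 0 ≤ B (x : OnePoint E) (y : OnePoint E) g g :=
      fun x y g => (hi g x y).1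
    have hBker : ∀ (x y : E) (g : ↥D), φ (x : OnePoint E) (y : OnePoint E) g = 0 →
        B (x : OnePoint E) (y : OnePoint E) g g = 0 := by
      intro x y g hg
      exact (hi g x y).2 (by simpa [φ, sub_eq_zero] using hg)
    -- define α
    let α : E → E → ℝ := fun x y =>
      if hex : ∃ g : ↥D, (g : C(OnePoint E, ℝ)) (x : OnePoint E)
          ≠ (g : C(OnePoint E, ℝ)) (y : OnePoint E) then
        2 * Q hex.choose hex.choose ((x : OnePoint E), (y : OnePoint E))
          / ((hex.choose : C(OnePoint E, ℝ)) (x : OnePoint E)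
             - (hex.choose : C(OnePoint E, ℝ)) (y : OnePoint E)) ^ 2
      else 0
    -- the key formula
    have key : ∀ (x y : E) (g h : ↥D),
        Q g h ((x : OnePoint E), (y : OnePoint E))
          = (1 / 2) * α x y *
            ((g : C(OnePoint E, ℝ)) (x : OnePoint E) - (g : C(OnePoint E, ℝ)) (y : OnePoint E)) *
            ((h : C(OnePoint E, ℝ)) (x : OnePoint E) - (h : C(OnePoint E, ℝ)) (y : OnePoint E)) := by
      intro x y g h
      by_cases hex : ∃ g : ↥D, (g : C(OnePoint E, ℝ)) (x : OnePoint E)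
          ≠ (g : C(OnePoint E, ℝ)) (y : OnePoint E)
      · have hα : α x y = 2 * Q hex.choose hex.choose ((x : OnePoint E), (y : OnePoint E))
            / ((hex.choose : C(OnePoint E, ℝ)) (x : OnePoint E)
               - (hex.choose : C(OnePoint E, ℝ)) (y : OnePoint E)) ^ 2 := dif_pos hex
        set g₀ := hex.choose with hg₀def
        have hg₀ := hex.choose_spec
        have hφ : φ (x : OnePoint E) (y : OnePoint E) g₀ ≠ 0 := sub_ne_zero.mpr hg₀
        have hfac := QisPsi.bilin_factor (B (x : OnePoint E) (y : OnePoint E))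
          (hBsym _ _) (fun v => hBpos x y v) (φ (x : OnePoint E) (y : OnePoint E))
          (fun v => hBker x y v) g₀ hφ g h
        rw [hBapp] at hfac
        rw [hfac, hα]
        simp only [hBapp, φ, LinearMap.coe_mk, AddHom.coe_mk]
        field_simp
      · have hα : α x y = 0 := dif_neg hex
        push_neg at hex
        have hB0 : B (x : OnePoint E) (y : OnePoint E) g g = 0 :=
          hBker x y g (by simp [φ, sub_eq_zero, hex g])
        have := QisPsi.bilin_null (B (x : OnePoint E) (y : OnePoint E)) (hBsym _ _)
          (fun v => hBpos x y v) hB0 h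
        rw [hBapp] at this
        rw [this, hα]
        ring
    refine ⟨α, ?_, ?_, fun g h x y => key x y g h⟩
    · -- nonnegativity
      intro x y
      by_cases hex : ∃ g : ↥D, (g : C(OnePoint E, ℝ)) (x : OnePoint E)
          ≠ (g : C(OnePoint E, ℝ)) (y : OnePoint E)
      · rw [show α x y = _ from dif_pos hex]
        apply div_nonneg
        · linarith [(hi hex.choose x y).1]
        · positivity
      · rw [show α x y = _ from dif_neg hex]
    · -- symmetry
      intro x y
      by_cases hex : ∃ g : ↥D, (g : C(OnePoint E, ℝ)) (x : OnePoint E)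
          ≠ (g : C(OnePoint E, ℝ)) (y : OnePoint E)
      · obtain ⟨g, hg⟩ := hex
        have k1 := key x y g g
        have k2 := key y x g g
        rw [hQval g g (x : OnePoint E) (y : OnePoint E)] at k1
        rw [k2] at k1
        have hne : ((g : C(OnePoint E, ℝ)) (x : OnePoint E)
            - (g : C(OnePoint E, ℝ)) (y : OnePoint E)) ≠ 0 := sub_ne_zero.mpr hg
        have : α y x * ((g : C(OnePoint E, ℝ)) (x : OnePoint E)
            - (g : C(OnePoint E, ℝ)) (y : OnePoint E)) ^ 2
            = α x y * ((g : C(OnePoint E, ℝ)) (x : OnePoint E)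
            - (g : C(OnePoint E, ℝ)) (y : OnePoint E)) ^ 2 := by nlinarith [k1]
        have := mul_right_cancel₀ (pow_ne_zero 2 hne) this
        exact this.symm
      · have hex' : ¬ ∃ g : ↥D, (g : C(OnePoint E, ℝ)) (y : OnePoint E)
            ≠ (g : C(OnePoint E, ℝ)) (x : OnePoint E) :=
          fun ⟨g, hg⟩ => hex ⟨g, hg.symm⟩
        rw [show α x y = 0 from dif_neg hex, show α y x = 0 from dif_neg hex']
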